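/- arXiv:2110.14762 — 2 statements merged into one kernel-verified Lean document; each statement's English description precedes it below -/
import Mathlib

section
/- Let $\lambda \in \mathbb{C}$. There exist $(u,v) \in \mathbb{C}^2 \setminus \{(0,0)\}$ and $(x,y) \in \mathbb{C}^2 \setminus \{(0,0)\}$ satisfying the four equations $x^3 + \lambda x^2 y = 0$, $y^3 + \lambda y^2 x = 0$, $3ux^2 + 2\lambda uxy - \lambda v y^2 = 0$, $3vy^2 + 2\lambda vxy - \lambda u x^2 = 0$ (i.e., the vanishing of all four partial derivatives of $F(u,v,x,y) = u(x^3+\lambda x^2y) - v(y^3+\lambda y^2x)$) if and only if $\lambda = 1$ or $\lambda = -1$. (Equivalently, the curve of bidegree $(1,3)$ in $\mathbb{P}^1\times\mathbb{P}^1$ defined by $u(x^3+\lambda x^2y) = v(y^3+\lambda y^2x)$ is smooth exactly when $\lambda \neq \pm 1$.) -/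
/-!
A singular point satisfies `∂F/∂u = x²(x + λy) = 0` and `∂F/∂v = -y²(y + λx) = 0`. Away from
`x = 0` and `y = 0` this says `x + λy = 0` and `y + λx = 0`, a linear system in `(x, y)` with
a nonzero solution exactly when `λ² = 1`; the axes contribute nothing, since `x = 0` forces
`y³ = 0`. Conversely, for `λ² = 1` the point `([1 : λ], [1 : -λ])` is singular.
-/

section

variable {R : Type*} [CommRing R] [NoZeroDivisors R]

theorem cube_add_mul_sq_mul_eq_zero_iff {lam x y : R} :
    x ^ 3 + lam * x ^ 2 * y = 0 ↔ x = 0 ∨ x + lam * y = 0 := by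
  rw [show x ^ 3 + lam * x ^ 2 * y = x ^ 2 * (x + lam * y) by ring, mul_eq_zero,
    pow_eq_zero_iff two_ne_zero]

theorem sq_eq_one_of_cube_add_mul_sq_mul_eq_zero {lam x y : R} (hxy : (x, y) ≠ (0, 0))
    (hx : x ^ 3 + lam * x ^ 2 * y = 0) (hy : y ^ 3 + lam * y ^ 2 * x = 0) : lam ^ 2 = 1 := by
  rw [Ne, Prod.mk.injEq, not_and_or] at hxy
  rcases cube_add_mul_sq_mul_eq_zero_iff.mp hx with rfl | hx <;>
    rcases cube_add_mul_sq_mul_eq_zero_iff.mp hy with rfl | hy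
  · simp at hxy
  · simp_all
  · simp_all
  · have hx0 : x ≠ 0 := by
      rintro rfl
      simp_all
    have : (lam ^ 2 - 1) * x = 0 := by linear_combination lam * hy - hx
    exact sub_eq_zero.mp ((mul_eq_zero.mp this).resolve_right hx0)

end

/-- The bidegree (1,3) curve `u(x³+λx²y) = v(y³+λy²x)` in ℙ¹×ℙ¹ is singular
(i.e. the four partial derivatives of `F = u(x³+λx²y) - v(y³+λy²x)` have a common
zero with `(u,v) ≠ (0,0)` and `(x,y) ≠ (0,0)`) if and only if `λ = ±1`. -/
theorem stmt_0 (lam : ℂ) :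
    (∃ u v x y : ℂ, (u, v) ≠ (0, 0) ∧ (x, y) ≠ (0, 0) ∧
      x ^ 3 + lam * x ^ 2 * y = 0 ∧
      y ^ 3 + lam * y ^ 2 * x = 0 ∧
      3 * u * x ^ 2 + 2 * lam * u * x * y - lam * v * y ^ 2 = 0 ∧
      3 * v * y ^ 2 + 2 * lam * v * x * y - lam * u * x ^ 2 = 0) ↔
    lam = 1 ∨ lam = -1 := by
  rw [← sq_eq_one_iff]
  constructor
  · rintro ⟨u, v, x, y, -, hxy, hx, hy, -, -⟩
    exact sq_eq_one_of_cube_add_mul_sq_mul_eq_zero hxy hx hy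
  · intro h
    refine ⟨1, lam, 1, -lam, by simp, by simp, ?_, ?_, ?_, ?_⟩
    · linear_combination -h
    · ring
    · linear_combination -(lam ^ 2 + 3) * h
    · linear_combination lam * h
end

section
/- Let $\lambda \in \mathbb{C}$ with $\lambda \notin \{0, 1, -1, 3, -3\}$, and let $C_4 \subset \mathbb{P}^1(\mathbb{C})\times\mathbb{P}^1(\mathbb{C})$ be the curve $u(x^3+\lambda x^2y) = v(y^3+\lambda y^2x)$, with $\sigma\colon C_4 \to \mathbb{P}^1(\mathbb{C})$ the projection $([u:v],[x:y]) \mapsto [u:v]$. Then the set of points $[u:v] \in \mathbb{P}^1(\mathbb{C})$ whose fiber $\{[x:y] \in \mathbb{P}^1(\mathbb{C}) : u(x^3+\lambda x^2y) = v(y^3+\lambda y^2x)\}$ has fewer than $3$ elements consists of exactly $4$ points, and each of these $4$ exceptional fibers has exactly $2$ elements. In particular, the triple cover $\sigma$ is ramified in exactly four distinct points of $C_4$, each with simple ramification. -/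
/-- The fiber of the projection `σ : C4 → ℙ¹`, `([u:v],[x:y]) ↦ [u:v]`, over a point
`[u:v] ∈ ℙ¹`: the root set in `ℙ¹` of the binary cubic `u(x³+λx²y) - v(y³+λy²x)`
(described via canonical representatives; the condition is homogeneous-invariant). -/
def sigmaFiber (lam : ℂ) (P : Projectivization ℂ (ℂ × ℂ)) :
    Set (Projectivization ℂ (ℂ × ℂ)) :=
  {Q | P.rep.1 * (Q.rep.1 ^ 3 + lam * Q.rep.1 ^ 2 * Q.rep.2) =
       P.rep.2 * (Q.rep.2 ^ 3 + lam * Q.rep.2 ^ 2 * Q.rep.1)}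


noncomputable section StmtAuxiliary



open Projectivization

/-- `[1:t]` in `ℙ¹`. -/
def ePt (t : ℂ) : Projectivization ℂ (ℂ × ℂ) :=
  Projectivization.mk ℂ (1, t) (by simp [Prod.ext_iff])

/-- `[0:1]` in `ℙ¹`. -/
def infPt : Projectivization ℂ (ℂ × ℂ) :=
  Projectivization.mk ℂ (0, 1) (by simp [Prod.ext_iff])

lemma ePt_inj : Function.Injective ePt := by
  intro s t h
  rw [ePt, ePt, Projectivization.mk_eq_mk_iff] at h
  obtain ⟨a, ha⟩ := h
  rw [Prod.ext_iff] at ha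
  obtain ⟨h1, h2⟩ := ha
  simp only [Prod.smul_fst, Prod.smul_snd, Units.smul_def, smul_eq_mul, mul_one] at h1 h2
  rw [h1] at h2; simpa using h2.symm

lemma ePt_ne_inf (t : ℂ) : ePt t ≠ infPt := by
  intro h
  rw [ePt, infPt] at h
  obtain ⟨a, ha⟩ := (Projectivization.mk_eq_mk_iff ℂ _ _ _ _).mp h
  rw [Prod.ext_iff] at ha
  simpa [Units.smul_def] using ha.1

lemma pt_cases (P : Projectivization ℂ (ℂ × ℂ)) : (∃ t, P = ePt t) ∨ P = infPt := by
  have hP := P.rep_nonzero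
  by_cases h1 : P.rep.1 = 0
  · right
    have h2 : P.rep.2 ≠ 0 := by
      intro h2; exact hP (Prod.ext h1 h2)
    rw [infPt, ← Projectivization.mk_rep P, Projectivization.mk_eq_mk_iff]
    exact ⟨Units.mk0 P.rep.2 h2, by ext <;> simp [h1]⟩
  · left
    refine ⟨P.rep.2 / P.rep.1, ?_⟩
    rw [ePt, ← Projectivization.mk_rep P, Projectivization.mk_eq_mk_iff]
    refine ⟨Units.mk0 P.rep.1 h1, ?_⟩
    ext
    · simp
    · simp only [Prod.smul_snd, Units.smul_def, Units.val_mk0, smul_eq_mul, Projectivization.mk_rep]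
      field_simp

/-- membership in the fiber, computed via arbitrary homogeneous representatives. -/
lemma mem_sigmaFiber_iff {P Q : Projectivization ℂ (ℂ × ℂ)} {a b c d : ℂ}
    (hab : (a, b) ≠ (0 : ℂ × ℂ)) (hcd : (c, d) ≠ (0 : ℂ × ℂ))
    (hP : P = Projectivization.mk ℂ (a, b) hab) (hQ : Q = Projectivization.mk ℂ (c, d) hcd)
    (lam : ℂ) :
    (P.rep.1 * (Q.rep.1 ^ 3 + lam * Q.rep.1 ^ 2 * Q.rep.2) =
       P.rep.2 * (Q.rep.2 ^ 3 + lam * Q.rep.2 ^ 2 * Q.rep.1)) ↔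
      a * (c ^ 3 + lam * c ^ 2 * d) = b * (d ^ 3 + lam * d ^ 2 * c) := by
  have hPr : ∃ α : ℂˣ, α • ((a, b) : ℂ × ℂ) = P.rep := by
    rw [hP]; exact Projectivization.exists_smul_eq_mk_rep ℂ _ hab
  have hQr : ∃ β : ℂˣ, β • ((c, d) : ℂ × ℂ) = Q.rep := by
    rw [hQ]; exact Projectivization.exists_smul_eq_mk_rep ℂ _ hcd
  obtain ⟨α, hα⟩ := hPr
  obtain ⟨β, hβ⟩ := hQr
  rw [Prod.ext_iff] at hα hβ
  simp only [Prod.smul_fst, Prod.smul_snd, Units.smul_def, smul_eq_mul] at hα hβ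
  obtain ⟨ha1, ha2⟩ := hα
  obtain ⟨hb1, hb2⟩ := hβ
  rw [← ha1, ← ha2, ← hb1, ← hb2]
  have hu : ((α : ℂ) * (β : ℂ) ^ 3) ≠ 0 :=
    mul_ne_zero α.ne_zero (pow_ne_zero _ β.ne_zero)
  constructor
  · intro h
    apply mul_left_cancel₀ hu
    linear_combination h
  · intro h
    linear_combination ((α : ℂ) * (β : ℂ) ^ 3) * h





/-- roots of the ramification quadratic are nonzero -/
lemma root_ne_zero {lam r : ℂ} (h0 : lam ≠ 0)
    (hr : 2*lam*r^2+(lam^2+3)*r+2*lam = 0) : r ≠ 0 := by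
  rintro rfl
  apply h0
  have : 2*lam = 0 := by linear_combination hr
  linear_combination this/2

lemma root_den_ne {lam r : ℂ} (h0 : lam ≠ 0)
    (hr : 2*lam*r^2+(lam^2+3)*r+2*lam = 0) : 3*r+2*lam ≠ 0 := by
  intro h
  apply h0
  have h3 : lam^3 = 0 := by
    linear_combination (9/2)*hr + (-3*lam*r + lam^2/2 - 9/2)*h
  exact pow_eq_zero_iff (by norm_num) |>.mp h3

lemma root_ne_third {lam r : ℂ} (h0 : lam ≠ 0) (h3 : lam ≠ 3) (h3' : lam ≠ -3)
    (hr : 2*lam*r^2+(lam^2+3)*r+2*lam = 0) : 3*r+lam ≠ 0 := by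
  intro h
  have key : lam*((lam-3)*(lam+3)) = 0 := by
    linear_combination (-9)*hr + (6*lam*r + lam^2+9)*h
  rcases mul_eq_zero.mp key with h' | h'
  · exact h0 h'
  rcases mul_eq_zero.mp h' with h'' | h''
  · exact h3 (by linear_combination h'')
  · exact h3' (by linear_combination h'')

/-- the cubic with a double root factors -/
lemma factor_at_double {lam r w : ℂ} (h0 : lam ≠ 0)
    (hr : 2*lam*r^2+(lam^2+3)*r+2*lam = 0)
    (hw : w*(r*(3*r+2*lam)) = lam) :
    ∀ t : ℂ, w*t^3+w*lam*t^2-lam*t-1 = w*(t-r)^2*(t-(-lam-2*r)) := by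
  have hne : 3*r+2*lam ≠ 0 := root_den_ne h0 hr
  have key : w*r^2*(lam+2*r) = -1 := by
    have h' : (3*r+2*lam) * (w*r^2*(lam+2*r) + 1) = 0 := by
      linear_combination (r*(lam+2*r))*hw + hr
    rcases mul_eq_zero.mp h' with h'' | h''
    · exact absurd h'' hne
    · linear_combination h''
  intro t
  linear_combination t*hw - key

/-- coefficient extraction for cubics over ℂ -/
lemma coeffs_eq {p3 p2 p1 p0 q3 q2 q1 q0 : ℂ}
    (h : ∀ t : ℂ, p3*t^3+p2*t^2+p1*t+p0 = q3*t^3+q2*t^2+q1*t+q0) :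
    p3 = q3 ∧ p2 = q2 ∧ p1 = q1 ∧ p0 = q0 := by
  have e0 := h 0; have e1 := h 1; have e2 := h (-1); have e3 := h 2
  refine ⟨?_, ?_, ?_, ?_⟩
  · linear_combination (e3 + 3*e0 - 3*e1 - e2)/6
  · linear_combination (e1+e2)/2 - e0
  · linear_combination (6*e1 - 2*e2 - e3 - 3*e0)/6
  · linear_combination e0

/-- if the cubic has a double root, the double root satisfies the quadratic and
determines `w` -/
lemma double_root_case {lam w x z : ℂ} (hw : w ≠ 0)
    (h : ∀ t : ℂ, w*t^3+w*lam*t^2-lam*t-1 = w*(t-x)^2*(t-z)) :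
    2*lam*x^2+(lam^2+3)*x+2*lam = 0 ∧ w*(x*(3*x+2*lam)) = lam := by
  have h' : ∀ t : ℂ, w*t^3+(w*lam)*t^2+(-lam)*t+(-1)
      = w*t^3+(-(w*(2*x+z)))*t^2+(w*(x^2+2*x*z))*t+(-(w*x^2*z)) :=
    fun t => by linear_combination h t
  obtain ⟨-, e2, e1, e0⟩ := coeffs_eq h'
  have hz : z = -lam-2*x := by
    have h'' : w*lam = w*(-(2*x+z)) := by linear_combination e2
    have := mul_left_cancel₀ hw h''
    linear_combination this
  subst hz
  have G2 : w*(x*(3*x+2*lam)) = lam := by linear_combination e1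
  have G0 : w*x^2*(lam+2*x) = -1 := by linear_combination -e0
  refine ⟨?_, G2⟩
  linear_combination (3*x+2*lam)*G0 - (x*(lam+2*x))*G2

/-- monic cubics over ℂ split -/
lemma cubic_factor (p q r : ℂ) :
    ∃ a b c : ℂ, ∀ t : ℂ, t^3+p*t^2+q*t+r = (t-a)*(t-b)*(t-c) := by
  classical
  obtain ⟨a, ha⟩ := Complex.exists_root
    (f := Polynomial.X^3 + Polynomial.C p * Polynomial.X^2
      + Polynomial.C q * Polynomial.X + Polynomial.C r) (by
    have : (Polynomial.X^3 + Polynomial.C p * Polynomial.X^2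
      + Polynomial.C q * Polynomial.X + Polynomial.C r).degree = 3 := by
      compute_degree!
    rw [this]; norm_num)
  have ha' : a^3+p*a^2+q*a+r = 0 := by
    simpa using ha
  obtain ⟨δ, hδ⟩ := IsAlgClosed.exists_pow_nat_eq ((p+a)^2 - 4*(a^2+p*a+q))
    (n := 2) (by norm_num)
  refine ⟨a, (-(p+a)+δ)/2, (-(p+a)-δ)/2, fun t => ?_⟩
  linear_combination ha' + ((t-a)/4) * hδ


lemma exists_ws (lam : ℂ) (h0 : lam ≠ 0) (h1 : lam ≠ 1) (h1' : lam ≠ -1)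
    (h3 : lam ≠ 3) (h3' : lam ≠ -3) :
    ∃ w1 w2 : ℂ, w1 ≠ 0 ∧ w2 ≠ 0 ∧ w1 ≠ w2 ∧
      (∀ x w : ℂ, (2*lam*x^2+(lam^2+3)*x+2*lam = 0) → w*(x*(3*x+2*lam)) = lam →
        w = w1 ∨ w = w2) ∧
      (∀ w : ℂ, w = w1 ∨ w = w2 → ∃ r s : ℂ, r ≠ s ∧
        ∀ t : ℂ, w*t^3+w*lam*t^2-lam*t-1 = w*(t-r)^2*(t-s)) := by
  obtain ⟨mu, hmu⟩ := IsAlgClosed.exists_pow_nat_eq ((lam^2-1)*(lam^2-9)) (n := 2)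
    (by norm_num)
  have hmu0 : mu ≠ 0 := by
    intro h
    rw [h] at hmu
    have : (lam-1)*((lam+1)*((lam-3)*(lam+3))) = 0 := by linear_combination -hmu
    rcases mul_eq_zero.mp this with h' | h'
    · exact h1 (by linear_combination h')
    rcases mul_eq_zero.mp h' with h' | h'
    · exact h1' (by linear_combination h')
    rcases mul_eq_zero.mp h' with h' | h'
    · exact h3 (by linear_combination h')
    · exact h3' (by linear_combination h')
  obtain ⟨r1, hr1def⟩ : ∃ r1 : ℂ, r1 = (-(lam^2+3)+mu)/(4*lam) := ⟨_, rfl⟩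
  obtain ⟨r2, hr2def⟩ : ∃ r2 : ℂ, r2 = (-(lam^2+3)-mu)/(4*lam) := ⟨_, rfl⟩
  have hl4 : (4:ℂ)*lam ≠ 0 := by
    intro h; exact h0 (by simpa using h)
  have hQd1 : 2*lam*r1^2+(lam^2+3)*r1+2*lam = 0 := by
    rw [hr1def]; field_simp; linear_combination 2*hmu
  have hQd2 : 2*lam*r2^2+(lam^2+3)*r2+2*lam = 0 := by
    rw [hr2def]; field_simp; linear_combination 2*hmu
  have hd1 : r1*(3*r1+2*lam) ≠ 0 :=
    mul_ne_zero (root_ne_zero h0 hQd1) (root_den_ne h0 hQd1)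
  have hd2 : r2*(3*r2+2*lam) ≠ 0 :=
    mul_ne_zero (root_ne_zero h0 hQd2) (root_den_ne h0 hQd2)
  refine ⟨lam/(r1*(3*r1+2*lam)), lam/(r2*(3*r2+2*lam)),
    div_ne_zero h0 hd1, div_ne_zero h0 hd2, ?_, ?_, ?_⟩
  · intro h
    rw [div_eq_div_iff hd1 hd2] at h
    have hc : r1*(3*r1+2*lam) = r2*(3*r2+2*lam) := mul_left_cancel₀ h0 (by
      linear_combination -h)
    have hsum : r1 + r2 = -(lam^2+3)/(2*lam) := by
      rw [hr1def, hr2def]; field_simp; ring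
    have hdiff : r1 - r2 = mu/(2*lam) := by
      rw [hr1def, hr2def]; field_simp; ring
    have hfac : (r1-r2)*(3*(r1+r2)+2*lam) = 0 := by linear_combination hc
    rcases mul_eq_zero.mp hfac with h' | h'
    · rw [hdiff] at h'
      exact hmu0 (by field_simp at h'; simpa using h')
    · rw [hsum] at h'
      have h2l : (2:ℂ)*lam ≠ 0 := by
        intro hh; exact h0 (by linear_combination hh/2)
      have h'' : 3*(-(lam^2+3)) + 2*lam*(2*lam) = 0 := by
        field_simp at h'
        linear_combination h'
      have hkey : (lam-3)*(lam+3) = 0 := by linear_combination h''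
      rcases mul_eq_zero.mp hkey with h5 | h5
      · exact h3 (by linear_combination h5)
      · exact h3' (by linear_combination h5)
  · intro x w hx hw
    have hsplit : (4*lam*x+(lam^2+3)-mu)*((4*lam*x+(lam^2+3)+mu)) = 0 := by
      have h2l : (2*lam) ≠ 0 := by intro h; exact h0 (by linear_combination h/2)
      apply mul_left_cancel₀ h2l
      linear_combination (16*lam^2)*hx - 2*lam*hmu
    have hxd : x*(3*x+2*lam) ≠ 0 :=
      mul_ne_zero (root_ne_zero h0 hx) (root_den_ne h0 hx)
    rcases mul_eq_zero.mp hsplit with h' | h'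
    · left
      have hxr : x = r1 := by rw [hr1def]; field_simp; linear_combination h'
      rw [eq_div_iff hd1, ← hxr]
      linear_combination hw
    · right
      have hxr : x = r2 := by rw [hr2def]; field_simp; linear_combination h'
      rw [eq_div_iff hd2, ← hxr]
      linear_combination hw
  · intro w hw
    rcases hw with rfl | rfl
    · refine ⟨r1, -lam-2*r1, ?_, factor_at_double h0 hQd1 (div_mul_cancel₀ lam hd1)⟩
      intro h
      exact root_ne_third h0 h3 h3' hQd1 (by linear_combination h)
    · refine ⟨r2, -lam-2*r2, ?_, factor_at_double h0 hQd2 (div_mul_cancel₀ lam hd2)⟩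
      intro h
      exact root_ne_third h0 h3 h3' hQd2 (by linear_combination h)

lemma mem_fiber_ee (lam w t : ℂ) :
    ePt t ∈ sigmaFiber lam (ePt w) ↔ w*t^3+w*lam*t^2-lam*t-1 = 0 := by
  have h := mem_sigmaFiber_iff (a := 1) (b := w) (c := 1) (d := t)
    (by simp [Prod.ext_iff]) (by simp [Prod.ext_iff]) rfl rfl lam
  refine Iff.trans h ?_
  constructor <;> intro hh <;> linear_combination -hh

lemma mem_fiber_einf (lam w : ℂ) :
    infPt ∈ sigmaFiber lam (ePt w) ↔ w = 0 := by
  have h := mem_sigmaFiber_iff (a := 1) (b := w) (c := 0) (d := 1)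
    (by simp [Prod.ext_iff]) (by simp [Prod.ext_iff]) rfl rfl lam
  refine Iff.trans h ?_
  constructor <;> intro hh <;> linear_combination -hh

lemma mem_fiber_infe (lam t : ℂ) :
    ePt t ∈ sigmaFiber lam infPt ↔ t^3+lam*t^2 = 0 := by
  have h := mem_sigmaFiber_iff (a := 0) (b := 1) (c := 1) (d := t)
    (by simp [Prod.ext_iff]) (by simp [Prod.ext_iff]) rfl rfl lam
  refine Iff.trans h ?_
  constructor <;> intro hh <;> linear_combination -hh

lemma mem_fiber_infinf (lam : ℂ) :
    ¬ (infPt ∈ sigmaFiber lam infPt) := by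
  have h := mem_sigmaFiber_iff (a := 0) (b := 1) (c := 0) (d := 1)
    (by simp [Prod.ext_iff]) (by simp [Prod.ext_iff]) rfl rfl lam
  intro hh
  have := h.mp hh
  simp at this

lemma fiber_inf (lam : ℂ) (h0 : lam ≠ 0) :
    sigmaFiber lam infPt = {ePt 0, ePt (-lam)} := by
  ext Q
  rcases pt_cases Q with ⟨t, rfl⟩ | rfl
  · rw [mem_fiber_infe]
    simp only [Set.mem_insert_iff, Set.mem_singleton_iff, ePt_inj.eq_iff]
    constructor
    · intro h
      have h' : t^2*(t+lam) = 0 := by linear_combination h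
      rcases mul_eq_zero.mp h' with h'' | h''
      · left; exact pow_eq_zero_iff (by norm_num) |>.mp h''
      · right; linear_combination h''
    · rintro (rfl | rfl) <;> ring
  · simp only [Set.mem_insert_iff, Set.mem_singleton_iff]
    constructor
    · intro h; exact absurd h (mem_fiber_infinf lam)
    · rintro (h | h) <;> exact absurd h.symm (ePt_ne_inf _)

lemma fiber_zero (lam : ℂ) (h0 : lam ≠ 0) :
    sigmaFiber lam (ePt 0) = {infPt, ePt (-(1/lam))} := by
  ext Q
  rcases pt_cases Q with ⟨t, rfl⟩ | rfl
  · rw [mem_fiber_ee]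
    simp only [Set.mem_insert_iff, Set.mem_singleton_iff, ePt_inj.eq_iff]
    constructor
    · intro h
      right
      field_simp
      linear_combination -h
    · rintro (h | rfl)
      · exact absurd h (ePt_ne_inf t)
      · field_simp; ring
  · rw [mem_fiber_einf]
    simp
lemma fiber_gen (lam w : ℂ) (hw : w ≠ 0) :
    sigmaFiber lam (ePt w) = ePt '' {t | w*t^3+w*lam*t^2-lam*t-1 = 0} := by
  ext Q
  rcases pt_cases Q with ⟨t, rfl⟩ | rfl
  · rw [mem_fiber_ee]
    constructor
    · intro h; exact ⟨t, h, rfl⟩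
    · rintro ⟨s, hs, hst⟩
      rwa [← ePt_inj hst]
  · rw [mem_fiber_einf]
    constructor
    · intro h; exact absurd h hw
    · rintro ⟨s, hs, hst⟩
      exact absurd hst (ePt_ne_inf s)



end StmtAuxiliary

/-- For `λ ∉ {0, ±1, ±3}`, the set of points of `ℙ¹` whose `σ`-fiber has fewer than
three elements consists of exactly four points, and each of these four exceptional
fibers has exactly two elements. -/
theorem stmt_3 (lam : ℂ) (h0 : lam ≠ 0) (h1 : lam ≠ 1) (h1' : lam ≠ -1)
    (h3 : lam ≠ 3) (h3' : lam ≠ -3) :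
    {P : Projectivization ℂ (ℂ × ℂ) | (sigmaFiber lam P).encard < 3}.encard = 4 ∧
    ∀ P : Projectivization ℂ (ℂ × ℂ),
      (sigmaFiber lam P).encard < 3 → (sigmaFiber lam P).encard = 2 := by
  obtain ⟨w1, w2, hw10, hw20, hw12, huniq, hdbl⟩ := exists_ws lam h0 h1 h1' h3 h3'
  -- the two special fibers
  have hcard_inf : (sigmaFiber lam infPt).encard = 2 := by
    rw [fiber_inf lam h0]
    exact Set.encard_pair (ePt_inj.ne (by simpa using h0))
  have hcard_zero : (sigmaFiber lam (ePt 0)).encard = 2 := by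
    rw [fiber_zero lam h0]
    exact Set.encard_pair (Ne.symm (ePt_ne_inf _))
  -- fibers over w1, w2
  have hcard_w : ∀ w : ℂ, w = w1 ∨ w = w2 → (sigmaFiber lam (ePt w)).encard = 2 := by
    intro w hw
    have hwne : w ≠ 0 := by rcases hw with rfl | rfl <;> assumption
    obtain ⟨r, s, hrs, hid⟩ := hdbl w hw
    have hset : {t : ℂ | w*t^3+w*lam*t^2-lam*t-1 = 0} = {r, s} := by
      ext t
      simp only [Set.mem_setOf_eq, Set.mem_insert_iff, Set.mem_singleton_iff]
      rw [hid t]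
      constructor
      · intro h
        rcases mul_eq_zero.mp h with h' | h'
        · rcases mul_eq_zero.mp h' with h' | h'
          · exact absurd h' hwne
          · left
            have := pow_eq_zero_iff (n := 2) (by norm_num) |>.mp h'
            linear_combination this
        · right; linear_combination h'
      · rintro (rfl | rfl) <;> ring
    rw [fiber_gen lam w hwne, hset, ePt_inj.encard_image]
    exact Set.encard_pair hrs
  -- generic fibers
  have hcard_gen : ∀ w : ℂ, w ≠ 0 → w ≠ w1 → w ≠ w2 →
      (sigmaFiber lam (ePt w)).encard = 3 := by
    intro w hw hww1 hww2
    obtain ⟨a, b, c, hfac⟩ := cubic_factor lam (-(lam/w)) (-(1/w))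
    have key : ∀ t : ℂ, w*t^3+w*lam*t^2-lam*t-1 = w*((t-a)*(t-b)*(t-c)) := by
      intro t
      rw [← hfac t]
      field_simp
      ring
    have habs : ∀ x z : ℂ, (∀ t : ℂ, w*t^3+w*lam*t^2-lam*t-1 = w*(t-x)^2*(t-z)) → False := by
      intro x z hxz
      obtain ⟨hQ, hW⟩ := double_root_case hw hxz
      rcases huniq x w hQ hW with rfl | rfl
      · exact hww1 rfl
      · exact hww2 rfl
    have hab : a ≠ b := by
      rintro rfl
      exact habs a c (fun t => by linear_combination key t)
    have hac : a ≠ c := by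
      rintro rfl
      exact habs a b (fun t => by linear_combination key t)
    have hbc : b ≠ c := by
      rintro rfl
      exact habs b a (fun t => by linear_combination key t)
    have hset : {t : ℂ | w*t^3+w*lam*t^2-lam*t-1 = 0} = {a, b, c} := by
      ext t
      simp only [Set.mem_setOf_eq, Set.mem_insert_iff, Set.mem_singleton_iff]
      rw [key t]
      constructor
      · intro h
        rcases mul_eq_zero.mp h with h' | h'
        · exact absurd h' hw
        rcases mul_eq_zero.mp h' with h' | h'
        rcases mul_eq_zero.mp h' with h' | h'
        · left; linear_combination h'
        · right; left; linear_combination h'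
        · right; right; linear_combination h'
      · rintro (rfl | rfl | rfl) <;> ring
    rw [fiber_gen lam w hw, hset, ePt_inj.encard_image]
    rw [Set.encard_insert_of_notMem (by simp [hab, hac]), Set.encard_pair hbc]
    rfl
  -- the exceptional locus
  have hS : {P : Projectivization ℂ (ℂ × ℂ) | (sigmaFiber lam P).encard < 3}
      = {infPt, ePt 0, ePt w1, ePt w2} := by
    ext P
    simp only [Set.mem_setOf_eq, Set.mem_insert_iff, Set.mem_singleton_iff]
    constructor
    · intro hP
      rcases pt_cases P with ⟨t, rfl⟩ | rfl
      · by_cases ht0 : t = 0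
        · subst ht0; right; left; rfl
        by_cases ht1 : t = w1
        · subst ht1; right; right; left; rfl
        by_cases ht2 : t = w2
        · subst ht2; right; right; right; rfl
        · rw [hcard_gen t ht0 ht1 ht2] at hP
          exact absurd hP (lt_irrefl _)
      · left; rfl
    · rintro (rfl | rfl | rfl | rfl)
      · rw [hcard_inf]; norm_num
      · rw [hcard_zero]; norm_num
      · rw [hcard_w w1 (Or.inl rfl)]; norm_num
      · rw [hcard_w w2 (Or.inr rfl)]; norm_num
  constructor
  · rw [hS]
    rw [Set.encard_insert_of_notMem (by
      simp only [Set.mem_insert_iff, Set.mem_singleton_iff]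
      push_neg
      exact ⟨Ne.symm (ePt_ne_inf 0), Ne.symm (ePt_ne_inf w1), Ne.symm (ePt_ne_inf w2)⟩)]
    rw [Set.encard_insert_of_notMem (by
      simp only [Set.mem_insert_iff, Set.mem_singleton_iff]
      push_neg
      exact ⟨ePt_inj.ne (Ne.symm hw10), ePt_inj.ne (Ne.symm hw20)⟩)]
    rw [Set.encard_pair (ePt_inj.ne hw12)]
    rfl
  · intro P hP
    have hP' : P ∈ {P : Projectivization ℂ (ℂ × ℂ) | (sigmaFiber lam P).encard < 3} := hP
    rw [hS] at hP'
    simp only [Set.mem_insert_iff, Set.mem_singleton_iff] at hP'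
    rcases hP' with rfl | rfl | rfl | rfl
    · exact hcard_inf
    · exact hcard_zero
    · exact hcard_w w1 (Or.inl rfl)
    · exact hcard_w w2 (Or.inr rfl)
end
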